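/- arXiv:1009.5015 — 2 statements merged into one kernel-verified Lean document; each statement's English description precedes it below -/
import Mathlib

section
/- For real L ≥ 2 and integer parameters, the sum over R ≥ 1 of Σ_{q=1}^{⌊R/(αN₀)⌋} C(n,q)·C(R+q,q)·L^{−R/3} is at most Σ_{R≥1} L^{−R/4}, provided R ≥ λn/12 for each contributing term and L is sufficiently large (depending on α, N₀, λ); in particular the total is at most 2·L^{−λn/48} for sufficiently large L. -/
/-!
Bounding `C(n,q) ≤ 2ⁿ` and `C(R+q,q) ≤ 2^(R+n)` (the term vanishes for `q > n`), with at most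
`10⁶ R` values of `q`, and using `n ≤ 12000 R` on the range of summation, the `R`-th term is at
most `K^R L^(-R/3)` for an absolute constant `K`. Once `L ≥ K¹²` this is at most
`L^(-R/4) = r^R` with `r = L^(-1/4) ≤ 1/2`, and the geometric tail from `R ≥ n/12000` sums to
at most `2 L^(-n/48000)`.
-/

open Finset

lemma sum_Icc_choose_mul_choose_le (n R Q : ℕ) :
    ∑ q ∈ Icc 1 Q, (n.choose q : ℝ) * ((R + q).choose q : ℝ) ≤ Q * 2 ^ (2 * n + R) := by
  have hterm : ∀ q, n.choose q * (R + q).choose q ≤ 2 ^ (2 * n + R) := by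
    intro q
    rcases le_or_gt q n with hq | hq
    · calc n.choose q * (R + q).choose q ≤ 2 ^ n * 2 ^ (n + R) :=
            Nat.mul_le_mul (Nat.choose_le_two_pow n q)
              ((Nat.choose_le_two_pow _ q).trans (Nat.pow_le_pow_right two_pos (by omega)))
        _ = 2 ^ (2 * n + R) := by ring
    · simp [Nat.choose_eq_zero_of_lt hq]
  have := Finset.sum_le_card_nsmul (Icc 1 Q) _ _ fun q _ => hterm q
  simp only [Nat.card_Icc, add_tsub_cancel_right, smul_eq_mul] at this
  exact_mod_cast this

lemma natFloor_div_mul_natCast_le {x c : ℝ} (hx : 0 ≤ x) (hc : 0 < c) (N : ℕ) :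
    (⌊x / (c * N)⌋₊ : ℝ) ≤ x / c := by
  rcases N.eq_zero_or_pos with rfl | hN
  · simp only [Nat.cast_zero, mul_zero, div_zero, Nat.floor_zero]
    positivity
  · exact (Nat.floor_le (by positivity)).trans <| div_le_div_of_nonneg_left hx hc <|
      le_mul_of_one_le_right hc.le (by exact_mod_cast hN)

lemma sum_Icc_floor_choose_mul_choose_le_pow {c : ℝ} (hc0 : 0 < c) (hc1 : c ≤ 1)
    {n R a N : ℕ} (hR : 1 ≤ R) (hn : n ≤ a * R) :
    ∑ q ∈ Icc 1 ⌊(R : ℝ) / (c * N)⌋₊, (n.choose q : ℝ) * ((R + q).choose q : ℝ)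
      ≤ (c⁻¹ * 2 ^ (2 * a + 2)) ^ R := by
  have hR2 : (R : ℝ) ≤ 2 ^ R := by exact_mod_cast (Nat.lt_two_pow_self (n := R)).le
  have hc : c⁻¹ ≤ c⁻¹ ^ R := le_self_pow₀ (one_le_inv₀ hc0 |>.mpr hc1) (by omega)
  have h2 : (2 : ℝ) ^ (2 * n + R) ≤ 2 ^ (2 * (a * R) + R) :=
    pow_le_pow_right₀ one_le_two (by omega)
  calc _ ≤ (⌊(R : ℝ) / (c * N)⌋₊ : ℝ) * 2 ^ (2 * n + R) := sum_Icc_choose_mul_choose_le n R _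
    _ ≤ R / c * 2 ^ (2 * (a * R) + R) := by
        gcongr
        exact natFloor_div_mul_natCast_le (Nat.cast_nonneg R) hc0 N
    _ = c⁻¹ * R * 2 ^ (2 * (a * R) + R) := by ring
    _ ≤ c⁻¹ ^ R * 2 ^ R * 2 ^ (2 * (a * R) + R) := by gcongr
    _ = c⁻¹ ^ R * 2 ^ ((2 * a + 2) * R) := by rw [mul_assoc, ← pow_add]; congr 2; ring
    _ = (c⁻¹ * 2 ^ (2 * a + 2)) ^ R := by rw [mul_pow, pow_mul]

lemma mul_rpow_neg_div_three_le_rpow_neg_div_four {K L S : ℝ} {R : ℕ} (hK : 0 ≤ K)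
    (hL : 0 < L) (hKL : K ^ 12 ≤ L) (hS : S ≤ K ^ R) :
    S * L ^ (-(R : ℝ) / 3) ≤ L ^ (-(R : ℝ) / 4) := by
  have hK' : K ≤ L ^ ((12 : ℕ)⁻¹ : ℝ) := by
    rw [← Real.pow_rpow_inv_natCast hK (by norm_num : (12 : ℕ) ≠ 0)]
    exact Real.rpow_le_rpow (by positivity) hKL (by norm_num)
  calc S * L ^ (-(R : ℝ) / 3) ≤ (L ^ ((12 : ℕ)⁻¹ : ℝ)) ^ R * L ^ (-(R : ℝ) / 3) := by
        gcongr
        exact hS.trans (pow_le_pow_left₀ hK hK' R)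
    _ = L ^ (-(R : ℝ) / 4) := by
        rw [← Real.rpow_natCast, ← Real.rpow_mul hL.le, ← Real.rpow_add hL]
        ring_nf

lemma summable_and_tsum_le_of_le_geometric_tail {f : ℕ → ℝ} {r : ℝ} (m : ℕ) (hr0 : 0 ≤ r)
    (hr1 : r < 1) (hf0 : ∀ R, 0 ≤ f R) (hf : ∀ R, f R ≤ if m ≤ R then r ^ R else 0) :
    Summable f ∧ ∑' R, f R ≤ r ^ m / (1 - r) := by
  have hfr : ∀ R, f R ≤ r ^ R := fun R =>
    (hf R).trans (by split_ifs <;> simp [pow_nonneg hr0])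
  have hsum : Summable f := .of_nonneg_of_le hf0 hfr (summable_geometric_of_lt_one hr0 hr1)
  have hhead : ∑ R ∈ range m, f R = 0 :=
    sum_eq_zero fun R hR => le_antisymm
      ((hf R).trans_eq (if_neg (by simpa using hR))) (hf0 R)
  refine ⟨hsum, ?_⟩
  calc ∑' R, f R = ∑' R, f (R + m) := by rw [← hsum.sum_add_tsum_nat_add m, hhead, zero_add]
    _ ≤ ∑' R, r ^ R * r ^ m := by
        refine (hsum.comp_injective (add_left_injective m)).tsum_le_tsum (fun R => ?_)
          ((summable_geometric_of_lt_one hr0 hr1).mul_right _)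
        simpa [pow_add] using hfr (R + m)
    _ = r ^ m / (1 - r) := by
        rw [tsum_mul_right, tsum_geometric_of_lt_one hr0 hr1, inv_mul_eq_div]

lemma tsum_ite_le_rpow_neg_div_four {L : ℝ} (hL : 16 ≤ L) {p : ℕ → Prop} [DecidablePred p]
    {a : ℕ → ℝ} {m : ℕ} (ha0 : ∀ R, 0 ≤ a R) (ha : ∀ R, p R → a R ≤ L ^ (-(R : ℝ) / 4))
    (hp : ∀ R, p R → 1 ≤ R ∧ m ≤ R) :
    (∑' R, if p R then a R else 0) ≤ (∑' R : ℕ, if 1 ≤ R then L ^ (-(R : ℝ) / 4) else 0) ∧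
      (∑' R, if p R then a R else 0) ≤ 2 * L ^ (-(m : ℝ) / 4) := by
  have hL0 : 0 < L := by linarith
  set r := L ^ (-(1 : ℝ) / 4)
  have hpow : ∀ R : ℕ, L ^ (-(R : ℝ) / 4) = r ^ R := fun R => by
    rw [← Real.rpow_natCast, ← Real.rpow_mul hL0.le]
    ring_nf
  have hr0 : 0 ≤ r := Real.rpow_nonneg hL0.le _
  have hr : r ≤ 1 / 2 := by
    have h4 : r ^ 4 = L⁻¹ := by
      rw [← hpow 4, ← Real.rpow_neg_one]
      norm_num
    refine (pow_le_pow_iff_left₀ hr0 (by norm_num) (by norm_num : 4 ≠ 0)).mp ?_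
    rw [h4]
    exact (inv_anti₀ (by norm_num) hL).trans_eq (by norm_num)
  have hr1 : r < 1 := by linarith
  obtain ⟨hf, hf_le⟩ := summable_and_tsum_le_of_le_geometric_tail m hr0 hr1
    (f := fun R => if p R then a R else 0) (fun R => by split_ifs <;> simp [ha0])
    (fun R => by
      split_ifs with h h'
      · exact (ha R h).trans_eq (hpow R)
      · exact absurd (hp R h).2 h'
      · exact pow_nonneg hr0 R
      · rfl)
  obtain ⟨hg, -⟩ := summable_and_tsum_le_of_le_geometric_tail 1 hr0 hr1
    (f := fun R : ℕ => if 1 ≤ R then L ^ (-(R : ℝ) / 4) else 0)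
    (fun R => by split_ifs <;> simp [hpow, hr0])
    (fun R => by split_ifs <;> simp [hpow])
  refine ⟨hf.tsum_le_tsum (fun R => ?_) hg, hf_le.trans ?_⟩
  · split_ifs with h h'
    · exact ha R h
    · exact absurd (hp R h).1 h'
    · exact Real.rpow_nonneg hL0.le _
    · rfl
  · rw [hpow, div_le_iff₀ (by linarith)]
    nlinarith [pow_nonneg hr0 m]

open Classical in
theorem stmt5_general (N₀ : ℕ) :
    ∃ L₀ : ℝ, 2 ≤ L₀ ∧ ∀ L : ℝ, L₀ ≤ L → ∀ n : ℕ,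
      (∑' R : ℕ, if 1 ≤ R ∧ (1 / 1000 : ℝ) * n / 12 ≤ (R : ℝ) then
          (∑ q ∈ Finset.Icc 1 (Nat.floor ((R : ℝ) / ((1 / 1000000 : ℝ) * N₀))),
            (n.choose q : ℝ) * ((R + q).choose q : ℝ)) * L ^ (-(R : ℝ) / 3)
        else 0)
        ≤ (∑' R : ℕ, if 1 ≤ R then L ^ (-(R : ℝ) / 4) else 0) ∧
      (∑' R : ℕ, if 1 ≤ R ∧ (1 / 1000 : ℝ) * n / 12 ≤ (R : ℝ) then
          (∑ q ∈ Finset.Icc 1 (Nat.floor ((R : ℝ) / ((1 / 1000000 : ℝ) * N₀))),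
            (n.choose q : ℝ) * ((R + q).choose q : ℝ)) * L ^ (-(R : ℝ) / 3)
        else 0)
        ≤ 2 * L ^ (-((1 / 1000 : ℝ) * n) / 48) := by
  set K : ℝ := (1 / 1000000 : ℝ)⁻¹ * 2 ^ (2 * 12000 + 2)
  have hK : 16 ≤ K :=
    calc (16 : ℝ) = 1 * 2 ^ 4 := by norm_num
      _ ≤ (1 / 1000000 : ℝ)⁻¹ * 2 ^ (2 * 12000 + 2) := by gcongr <;> norm_num
  have hK1 : 1 ≤ K := hK.trans' (by norm_num)
  have hK12 : K ≤ K ^ 12 := le_self_pow₀ hK1 (by norm_num)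
  refine ⟨K ^ 12, (hK.trans' (by norm_num)).trans hK12, fun L hL n => ?_⟩
  have hL16 : 16 ≤ L := hK.trans (hK12.trans hL)
  have hL0 : 0 < L := hL16.trans_lt' (by norm_num)
  obtain ⟨hfg, hf_tail⟩ := tsum_ite_le_rpow_neg_div_four hL16
    (p := fun R => 1 ≤ R ∧ (1 / 1000 : ℝ) * n / 12 ≤ R) (m := ⌈(n : ℝ) / 12000⌉₊)
    (fun R => mul_nonneg (by positivity) (Real.rpow_nonneg hL0.le _))
    (fun R hR => mul_rpow_neg_div_three_le_rpow_neg_div_four (zero_le_one.trans hK1) hL0 hL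
      (sum_Icc_floor_choose_mul_choose_le_pow (by norm_num) (by norm_num) hR.1
        (by exact_mod_cast (show (n : ℝ) ≤ 12000 * R by linarith [hR.2]))))
    (fun R hR => ⟨hR.1, Nat.ceil_le.mpr (by linarith [hR.2])⟩)
  refine ⟨hfg, hf_tail.trans ?_⟩
  have hm : (n : ℝ) / 12000 ≤ ⌈(n : ℝ) / 12000⌉₊ := Nat.le_ceil _
  exact mul_le_mul_of_nonneg_left
    (Real.rpow_le_rpow_of_exponent_le (hL16.trans' (by norm_num)) (by linarith only [hm]))
    zero_le_two

open Classical in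
/-- Counting estimate for exponential tails: with `λ = 10⁻³`, `α = 10⁻⁶`, the sum over
`R ≥ 1` (restricted to `R ≥ λn/12`) of `Σ_{q=1}^{⌊R/(αN₀)⌋} C(n,q)·C(R+q,q)·L^{−R/3}` is
at most `Σ_{R≥1} L^{−R/4}`, and in particular at most `2·L^{−λn/48}`, for `L ≥ 2`
sufficiently large depending on `α, N₀, λ`. -/
theorem stmt5 (N₀ : ℕ) (hN₀ : 0 < N₀) :
    ∃ L₀ : ℝ, 2 ≤ L₀ ∧ ∀ L : ℝ, L₀ ≤ L → ∀ n : ℕ,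
      (∑' R : ℕ, if 1 ≤ R ∧ (1 / 1000 : ℝ) * n / 12 ≤ (R : ℝ) then
          (∑ q ∈ Finset.Icc 1 (Nat.floor ((R : ℝ) / ((1 / 1000000 : ℝ) * N₀))),
            (n.choose q : ℝ) * ((R + q).choose q : ℝ)) * L ^ (-(R : ℝ) / 3)
        else 0)
        ≤ (∑' R : ℕ, if 1 ≤ R then L ^ (-(R : ℝ) / 4) else 0) ∧
      (∑' R : ℕ, if 1 ≤ R ∧ (1 / 1000 : ℝ) * n / 12 ≤ (R : ℝ) then
          (∑ q ∈ Finset.Icc 1 (Nat.floor ((R : ℝ) / ((1 / 1000000 : ℝ) * N₀))),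
            (n.choose q : ℝ) * ((R + q).choose q : ℝ)) * L ^ (-(R : ℝ) / 3)
        else 0)
        ≤ 2 * L ^ (-((1 / 1000 : ℝ) * n) / 48) :=
  stmt5_general N₀
end

section
/- Let F be a uniformly expanding map with countable Markov partition {ω} of S¹ and return times R(ω), such that the F-invariant density is bounded above and below by positive constants, and K ≤ log‖F'|ω‖ ≤ K'·|log|ω|| for all ω. If there is 0 < γ < 1 with |log|ω|| ≤ |ω|^{−γ} for all ω, and Σ_ω |ω|^{1−γ} < ∞, then log|F'| is ν-integrable and ∫ log|F'| dν ≥ K > 0. -/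
/-! Since the density is at most `C`, `ν ≤ C • volume`, so integrability may be checked against
Lebesgue measure. There `g ≤ K' |log |ω n||` on `ω n`, and `|log |ω n|| · |ω n| ≤ |ω n| ^ (1 - γ)`
is summable. The lower bound `g ≥ K` holds `ν`-a.e. because the partition covers Lebesgue-almost
everything and `ν ≪ volume`. -/

open MeasureTheory

theorem Real.abs_log_mul_self_le_rpow_one_sub {t γ : ℝ} (ht : 0 ≤ t)
    (h : |Real.log t| ≤ t ^ (-γ)) : |Real.log t| * t ≤ t ^ (1 - γ) := by
  rcases ht.eq_or_lt with rfl | ht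
  · simpa using Real.rpow_nonneg le_rfl (1 - γ)
  · calc |Real.log t| * t ≤ t ^ (-γ) * t := by gcongr
      _ = t ^ (1 - γ) := by rw [← Real.rpow_add_one ht.ne']; ring_nf

theorem MeasureTheory.integrable_of_summable_bound_mul_measureReal {α ι E : Type*}
    [MeasurableSpace α] [Countable ι] [NormedAddCommGroup E] {μ : Measure α} [IsFiniteMeasure μ]
    {s : ι → Set α} (hs : ∀ i, MeasurableSet (s i)) (hcover : μ (⋃ i, s i)ᶜ = 0)
    {f : α → E} (hf : AEStronglyMeasurable f μ) {M : ι → ℝ} (hfM : ∀ i, ∀ x ∈ s i, ‖f x‖ ≤ M i)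
    (hM : Summable fun i => M i * μ.real (s i)) : Integrable f μ := by
  have hon : ∀ i, IntegrableOn f (s i) μ := fun i =>
    .of_bound (measure_lt_top μ _) hf.restrict (M i) (ae_restrict_of_forall_mem (hs i) (hfM i))
  have hsum : Summable fun i => ∫ x in s i, ‖f x‖ ∂μ := by
    refine hM.of_nonneg_of_le (fun i => integral_nonneg fun _ => norm_nonneg _) fun i => ?_
    refine (le_abs_self _).trans ?_
    simpa using norm_setIntegral_le_of_norm_le_const (measure_lt_top μ (s i))
      (f := fun x => ‖f x‖) (by simpa using hfM i)
  rw [← integrableOn_univ]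
  exact (integrableOn_iUnion_of_summable_integral_norm hon hsum).congr_set_ae
    (ae_eq_univ.2 hcover).symm

theorem stmt9_general (ν : Measure UnitAddCircle) [IsProbabilityMeasure ν]
    (ρ : UnitAddCircle → ℝ) (c C : ℝ)
    (hν : ν = volume.withDensity (fun x => ENNReal.ofReal (ρ x)))
    (hρ : ∀ x, c ≤ ρ x ∧ ρ x ≤ C)
    (ω : ℕ → Set UnitAddCircle) (hωmeas : ∀ n, MeasurableSet (ω n))
    (hωfull : volume (⋃ n, ω n)ᶜ = 0)
    (g : UnitAddCircle → ℝ) (hg : Measurable g)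
    (K K' γ : ℝ) (hK : 0 < K)
    (hbound : ∀ n, ∀ x ∈ ω n,
      K ≤ g x ∧ g x ≤ K' * |Real.log (volume (ω n)).toReal|)
    (hlog : ∀ n, |Real.log (volume (ω n)).toReal| ≤ ((volume (ω n)).toReal) ^ (-γ))
    (hsum : Summable (fun n => ((volume (ω n)).toReal) ^ (1 - γ))) :
    Integrable g ν ∧ K ≤ ∫ x, g x ∂ν ∧ 0 < ∫ x, g x ∂ν := by
  have hν_le : ν ≤ ENNReal.ofReal C • volume := by
    rw [hν, ← withDensity_const]
    exact withDensity_mono (ae_of_all _ fun x => ENNReal.ofReal_le_ofReal (hρ x).2)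
  have hg_volume : Integrable g volume := by
    refine integrable_of_summable_bound_mul_measureReal hωmeas hωfull hg.aestronglyMeasurable
      (M := fun n => K' * |Real.log (volume (ω n)).toReal|) (fun n x hx => ?_) ?_
    · rw [Real.norm_of_nonneg (hK.le.trans (hbound n x hx).1)]
      exact (hbound n x hx).2
    · refine (hsum.mul_left |K'|).of_norm_bounded fun n => ?_
      rw [Real.norm_eq_abs, abs_mul, abs_mul, abs_abs, abs_of_nonneg measureReal_nonneg, mul_assoc]
      exact mul_le_mul_of_nonneg_left
        (Real.abs_log_mul_self_le_rpow_one_sub ENNReal.toReal_nonneg (hlog n)) (abs_nonneg _)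
  have hint : Integrable g ν := (hg_volume.smul_measure ENNReal.ofReal_ne_top).mono_measure hν_le
  have hν_ac : ν ≪ volume := hν ▸ withDensity_absolutelyContinuous _ _
  have hcover : ∀ᵐ x ∂ν, x ∈ ⋃ n, ω n := hν_ac hωfull
  have hK_le : ∀ᵐ x ∂ν, K ≤ g x := by
    filter_upwards [hcover] with x hx
    obtain ⟨n, hn⟩ := Set.mem_iUnion.mp hx
    exact (hbound n x hn).1
  have hK_le_integral : K ≤ ∫ x, g x ∂ν := by
    simpa using integral_mono_ae (integrable_const K) hint hK_le
  exact ⟨hint, hK_le_integral, hK.trans_le hK_le_integral⟩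

/-- Integrability of `log|F'|` for the induced Markov map (Corollary 4.6 setting):
if the invariant density is bounded between `c` and `C`, and on each partition element
`ω` one has `K ≤ log|F'| ≤ K'·|log|ω||` with `|log|ω|| ≤ |ω|^{−γ}` and
`Σ_ω |ω|^{1−γ} < ∞`, then `log|F'|` is `ν`-integrable with `∫ log|F'| dν ≥ K > 0`. -/
theorem stmt9 (ν : Measure UnitAddCircle) [IsProbabilityMeasure ν]
    (ρ : UnitAddCircle → ℝ) (c C : ℝ) (hc : 0 < c)
    (hν : ν = volume.withDensity (fun x => ENNReal.ofReal (ρ x)))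
    (hρ : ∀ x, c ≤ ρ x ∧ ρ x ≤ C)
    (ω : ℕ → Set UnitAddCircle) (hωmeas : ∀ n, MeasurableSet (ω n))
    (hωdisj : Pairwise (Function.onFun Disjoint ω))
    (hωfull : volume (⋃ n, ω n)ᶜ = 0)
    (g : UnitAddCircle → ℝ) (hg : Measurable g)
    (K K' γ : ℝ) (hK : 0 < K) (hγ0 : 0 < γ) (hγ1 : γ < 1)
    (hbound : ∀ n, ∀ x ∈ ω n,
      K ≤ g x ∧ g x ≤ K' * |Real.log (volume (ω n)).toReal|)
    (hlog : ∀ n, |Real.log (volume (ω n)).toReal| ≤ ((volume (ω n)).toReal) ^ (-γ))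
    (hsum : Summable (fun n => ((volume (ω n)).toReal) ^ (1 - γ))) :
    Integrable g ν ∧ K ≤ ∫ x, g x ∂ν ∧ 0 < ∫ x, g x ∂ν :=
  stmt9_general ν ρ c C hν hρ ω hωmeas hωfull g hg K K' γ hK hbound hlog hsum
end
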